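/- arXiv:1507.01470 — 3 statements merged into one kernel-verified Lean document; each statement's English description precedes it below -/
import Mathlib

section
/- Let k ∈ ℕ, ρ ∈ ℝ with ρ > 0, and λ₁, λ₂ ∈ ℂ. Consider the Ovsienko–Redou linear system S(λ₁, λ₂; k) in unknowns c_{r,t} (r, t ∈ ℕ, r + t ≤ k): for all r, t with r + t ≤ k - 1, E¹_{r,t}: 4(r+1)(r+1+λ₁)c_{r+1,t} + 2(k-r-t)(k-r+t-1+ρ+λ₂)c_{r,t} - (k-r-t+1)(k-r-t)c_{r,t-1} = 0, and E²_{r,t}: 4(t+1)(t+1+λ₂)c_{r,t+1} + 2(k-r-t)(k+r-t-1+ρ+λ₁)c_{r,t} - (k-r-t+1)(k-r-t)c_{r-1,t} = 0 (with the convention c_{r,-1} = c_{-1,t} = 0). If λ₂ ∉ {-1, -2, …, -k} ∪ {-ρ, -ρ-1, …, -ρ-(k-1)}, then the complex vector space of solutions (c_{r,t}) has dimension at most 1. -/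
/-- A family `c : ℤ × ℤ → ℂ` is a solution of the Ovsienko–Redou system
`S(λ₁, λ₂; k)`: the unknowns are `c (r, t)` for `0 ≤ r`, `0 ≤ t`, `r + t ≤ k`
(`c` vanishes outside this range, which also encodes the convention
`c_{r,-1} = c_{-1,t} = 0`), and the equations `E¹_{r,t}`, `E²_{r,t}` hold for
`r + t ≤ k - 1`. -/
def IsORSol (ρ : ℝ) (lam₁ lam₂ : ℂ) (k : ℕ) (c : ℤ × ℤ → ℂ) : Prop :=
  (∀ r t : ℤ, (r < 0 ∨ t < 0 ∨ (k : ℤ) < r + t) → c (r, t) = 0) ∧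
  (∀ r t : ℤ, 0 ≤ r → 0 ≤ t → r + t ≤ (k : ℤ) - 1 →
    4 * ((r : ℂ) + 1) * ((r : ℂ) + 1 + lam₁) * c (r + 1, t) +
      2 * ((k : ℂ) - r - t) * ((k : ℂ) - r + t - 1 + (ρ : ℂ) + lam₂) * c (r, t) -
      ((k : ℂ) - r - t + 1) * ((k : ℂ) - r - t) * c (r, t - 1) = 0) ∧
  (∀ r t : ℤ, 0 ≤ r → 0 ≤ t → r + t ≤ (k : ℤ) - 1 →
    4 * ((t : ℂ) + 1) * ((t : ℂ) + 1 + lam₂) * c (r, t + 1) +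
      2 * ((k : ℂ) - r - t) * ((k : ℂ) + r - t - 1 + (ρ : ℂ) + lam₁) * c (r, t) -
      ((k : ℂ) - r - t + 1) * ((k : ℂ) - r - t) * c (r - 1, t) = 0)


lemma or_key (k : ℕ) (ρ : ℝ) (lam₁ lam₂ : ℂ)
    (h1 : ∀ j : ℕ, 1 ≤ j → j ≤ k → lam₂ ≠ -(j : ℂ))
    (h2 : ∀ j : ℕ, j < k → lam₂ ≠ -(ρ : ℂ) - (j : ℂ))
    (c : ℤ × ℤ → ℂ) (hc : IsORSol ρ lam₁ lam₂ k c) (h0 : c ((k : ℤ), 0) = 0) :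
    ∀ p, c p = 0 := by
  obtain ⟨hv, he1, he2⟩ := hc
  have hrow0 : ∀ n : ℕ, c ((k : ℤ) - (n : ℤ), 0) = 0 := by
    intro n
    induction n with
    | zero => simpa using h0
    | succ n ih =>
      push_cast
      by_cases hn : n + 1 ≤ k
      · have hr : (0:ℤ) ≤ (k:ℤ) - ((n:ℤ) + 1) := by omega
        have heq := he1 ((k:ℤ) - ((n:ℤ) + 1)) 0 hr le_rfl (by omega)
        have hvan : c ((k:ℤ) - ((n:ℤ) + 1), 0 - 1) = 0 := hv _ _ (by omega)
        have e1 : ((k:ℤ) - ((n:ℤ) + 1)) + 1 = (k:ℤ) - (n:ℤ) := by ring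
        rw [e1, ih, hvan] at heq
        push_cast at heq
        have hn1 : ((n:ℂ) + 1) ≠ 0 := Nat.cast_add_one_ne_zero n
        have hY : (n:ℂ) + (ρ:ℂ) + lam₂ ≠ 0 := by
          intro h
          exact h2 n (by omega) (by linear_combination h)
        have hz : ((n:ℂ) + 1) * ((n:ℂ) + (ρ:ℂ) + lam₂) * c ((k:ℤ) - ((n:ℤ) + 1), 0) = 0 := by
          linear_combination heq / 2
        simpa [mul_eq_zero, hn1, hY] using hz
      · exact hv _ _ (by omega)
  have hall : ∀ t : ℕ, ∀ r : ℤ, c (r, (t : ℤ)) = 0 := by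
    intro t
    induction t with
    | zero =>
      intro r
      by_cases hr : 0 ≤ r ∧ r ≤ (k : ℤ)
      · have := hrow0 ((k : ℤ) - r).toNat
        rwa [show (k:ℤ) - ((((k:ℤ) - r).toNat : ℕ) : ℤ) = r by omega] at this
      · exact hv _ _ (by omega)
    | succ t ih =>
      intro r
      push_cast
      by_cases h : 0 ≤ r ∧ r + ((t:ℤ) + 1) ≤ (k : ℤ)
      · have heq := he2 r (t:ℤ) h.1 (Int.natCast_nonneg t) (by omega)
        rw [ih r, ih (r - 1)] at heq
        have hn1 : ((t:ℂ) + 1) ≠ 0 := Nat.cast_add_one_ne_zero t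
        have hY : (t:ℂ) + 1 + lam₂ ≠ 0 := by
          intro hh
          exact h1 (t+1) (by omega) (by omega) (by push_cast; linear_combination hh)
        have hz : ((t:ℂ) + 1) * ((t:ℂ) + 1 + lam₂) * c (r, (t:ℤ) + 1) = 0 := by
          linear_combination heq / 4
        simpa [mul_eq_zero, hn1, hY] using hz
      · exact hv _ _ (by omega)
  intro p
  obtain ⟨r, t⟩ := p
  by_cases ht : 0 ≤ t
  · have := hall t.toNat r
    rwa [show ((t.toNat : ℕ) : ℤ) = t by omega] at this
  · exact hv _ _ (by omega)

lemma or_comb (k : ℕ) (ρ : ℝ) (lam₁ lam₂ : ℂ) (a b : ℂ) (c d : ℤ × ℤ → ℂ)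
    (hc : IsORSol ρ lam₁ lam₂ k c) (hd : IsORSol ρ lam₁ lam₂ k d) :
    IsORSol ρ lam₁ lam₂ k (fun p => a * c p + b * d p) := by
  obtain ⟨hv, hA, hB⟩ := hc
  obtain ⟨hv', hA', hB'⟩ := hd
  refine ⟨fun r t h => by simp [hv r t h, hv' r t h],
    fun r t hr ht hk => ?_, fun r t hr ht hk => ?_⟩
  · dsimp only
    linear_combination a * hA r t hr ht hk + b * hA' r t hr ht hk
  · dsimp only
    linear_combination a * hB r t hr ht hk + b * hB' r t hr ht hk

/-- If `λ₂ ∉ {-1,…,-k} ∪ {-ρ,…,-ρ-(k-1)}` then the solution space of the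
Ovsienko–Redou system has dimension at most 1 (any two solutions are linearly
dependent). -/
theorem stmt_13 (k : ℕ) (ρ : ℝ) (hρ : 0 < ρ) (lam₁ lam₂ : ℂ)
    (h1 : ∀ j : ℕ, 1 ≤ j → j ≤ k → lam₂ ≠ -(j : ℂ))
    (h2 : ∀ j : ℕ, j < k → lam₂ ≠ -(ρ : ℂ) - (j : ℂ)) :
    ∀ c d : ℤ × ℤ → ℂ, IsORSol ρ lam₁ lam₂ k c → IsORSol ρ lam₁ lam₂ k d →
      ∃ a b : ℂ, (a ≠ 0 ∨ b ≠ 0) ∧ ∀ p : ℤ × ℤ, a * c p + b * d p = 0 := by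
  intro c d hc hd
  by_cases h : c ((k : ℤ), 0) = 0
  · refine ⟨1, 0, Or.inl one_ne_zero, fun p => ?_⟩
    simp [or_key k ρ lam₁ lam₂ h1 h2 c hc h p]
  · refine ⟨d ((k : ℤ), 0), -c ((k : ℤ), 0), Or.inr (by simpa using h), fun p => ?_⟩
    have he : IsORSol ρ lam₁ lam₂ k
        (fun p => d ((k : ℤ), 0) * c p + (-c ((k : ℤ), 0)) * d p) :=
      or_comb k ρ lam₁ lam₂ _ _ c d hc hd
    have h0 : (fun p => d ((k : ℤ), 0) * c p + (-c ((k : ℤ), 0)) * d p) ((k : ℤ), 0) = 0 := by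
      ring
    exact or_key k ρ lam₁ lam₂ h1 h2 _ he h0 p
end

section
/- With the Ovsienko–Redou system S(λ₁, λ₂; k) as defined (k ∈ ℕ, ρ > 0 real), suppose λ₁ = -k₁ for some integer k₁ with 1 ≤ k₁ ≤ k - 1, and λ₂ = -ρ - l₂ for some l₂ ∈ {0, 1, …, k-1}, with additionally λ₂ ∉ {-1, -2, …, -k}. If k₁ + l₂ < k, then dim Sol(λ₁, λ₂; k) ≤ 1; if k₁ + l₂ ≥ k, then dim Sol(λ₁, λ₂; k) ≤ 2. -/
private lemma intC_ne (m : ℤ) (h : m ≠ 0) : (m : ℂ) ≠ 0 := Int.cast_ne_zero.mpr h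

private lemma two_dep (x y : ℂ) : ∃ a b : ℂ, (a ≠ 0 ∨ b ≠ 0) ∧ a * x + b * y = 0 := by
  by_cases hx : x = 0
  · exact ⟨1, 0, Or.inl one_ne_zero, by simp [hx]⟩
  · exact ⟨y, -x, Or.inr (neg_ne_zero.mpr hx), by ring⟩

private lemma three_dep (x₁ x₂ x₃ y₁ y₂ y₃ : ℂ) :
    ∃ a b g : ℂ, (a ≠ 0 ∨ b ≠ 0 ∨ g ≠ 0) ∧
      a * x₁ + b * x₂ + g * x₃ = 0 ∧ a * y₁ + b * y₂ + g * y₃ = 0 := by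
  by_cases hx : x₁ = 0
  · by_cases hy : y₁ = 0
    · exact ⟨1, 0, 0, Or.inl one_ne_zero, by simp [hx], by simp [hy]⟩
    · obtain ⟨b, g, hbg, hrel⟩ := two_dep (y₁ * x₂ - y₂ * x₁) (y₁ * x₃ - y₃ * x₁)
      refine ⟨-(b * y₂ + g * y₃), b * y₁, g * y₁, ?_, by linear_combination hrel, by ring⟩
      rcases hbg with hb | hg
      · exact Or.inr (Or.inl (mul_ne_zero hb hy))
      · exact Or.inr (Or.inr (mul_ne_zero hg hy))
  · obtain ⟨b, g, hbg, hrel⟩ := two_dep (x₁ * y₂ - x₂ * y₁) (x₁ * y₃ - x₃ * y₁)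
    refine ⟨-(b * x₂ + g * x₃), b * x₁, g * x₁, ?_, by ring, by linear_combination hrel⟩
    rcases hbg with hb | hg
    · exact Or.inr (Or.inl (mul_ne_zero hb hx))
    · exact Or.inr (Or.inr (mul_ne_zero hg hx))

private lemma sol_comb3 {ρ : ℝ} {lam₁ lam₂ : ℂ} {k : ℕ} (a b g : ℂ)
    {c d e : ℤ × ℤ → ℂ} (hc : IsORSol ρ lam₁ lam₂ k c) (hd : IsORSol ρ lam₁ lam₂ k d)
    (he : IsORSol ρ lam₁ lam₂ k e) :
    IsORSol ρ lam₁ lam₂ k (fun p => a * c p + b * d p + g * e p) := by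
  obtain ⟨hc0, hc1, hc2⟩ := hc
  obtain ⟨hd0, hd1, hd2⟩ := hd
  obtain ⟨he0, he1, he2⟩ := he
  refine ⟨?_, ?_, ?_⟩
  · intro r t h
    simp only [hc0 r t h, hd0 r t h, he0 r t h, mul_zero, add_zero]
  · intro r t h1 h2 h3
    have H1 := hc1 r t h1 h2 h3
    have H2 := hd1 r t h1 h2 h3
    have H3 := he1 r t h1 h2 h3
    simp only []
    linear_combination a * H1 + b * H2 + g * H3
  · intro r t h1 h2 h3
    have H1 := hc2 r t h1 h2 h3
    have H2 := hd2 r t h1 h2 h3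
    have H3 := he2 r t h1 h2 h3
    simp only []
    linear_combination a * H1 + b * H2 + g * H3

private lemma sol_comb2 {ρ : ℝ} {lam₁ lam₂ : ℂ} {k : ℕ} (a b : ℂ)
    {c d : ℤ × ℤ → ℂ} (hc : IsORSol ρ lam₁ lam₂ k c) (hd : IsORSol ρ lam₁ lam₂ k d) :
    IsORSol ρ lam₁ lam₂ k (fun p => a * c p + b * d p) := by
  obtain ⟨hc0, hc1, hc2⟩ := hc
  obtain ⟨hd0, hd1, hd2⟩ := hd
  refine ⟨?_, ?_, ?_⟩
  · intro r t h
    simp only [hc0 r t h, hd0 r t h, mul_zero, add_zero]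
  · intro r t h1 h2 h3
    have H1 := hc1 r t h1 h2 h3
    have H2 := hd1 r t h1 h2 h3
    simp only []
    linear_combination a * H1 + b * H2
  · intro r t h1 h2 h3
    have H1 := hc2 r t h1 h2 h3
    have H2 := hd2 r t h1 h2 h3
    simp only []
    linear_combination a * H1 + b * H2

/-- If row 0 vanishes, the whole solution vanishes. -/
private lemma zero_prop {ρ : ℝ} {lam₁ lam₂ : ℂ} {k : ℕ} {c : ℤ × ℤ → ℂ}
    (h2 : ∀ j : ℕ, 1 ≤ j → j ≤ k → lam₂ ≠ -(j : ℂ))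
    (hc : IsORSol ρ lam₁ lam₂ k c) (hrow : ∀ r : ℤ, c (r, 0) = 0) :
    ∀ p : ℤ × ℤ, c p = 0 := by
  obtain ⟨hs, hE1, hE2⟩ := hc
  have key : ∀ t : ℕ, ∀ r : ℤ, c (r, (t : ℤ)) = 0 := by
    intro t
    induction t with
    | zero => simpa using hrow
    | succ t ih =>
      intro r
      by_cases hr : r < 0
      · exact hs _ _ (Or.inl hr)
      push_neg at hr
      by_cases hk' : r + (t : ℤ) ≤ (k : ℤ) - 1
      · have h := hE2 r (t : ℤ) hr (Int.natCast_nonneg t) hk'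
        rw [ih r, ih (r - 1)] at h
        push_cast at h ⊢
        have h' : (4 * ((t : ℂ) + 1) * ((t : ℂ) + 1 + lam₂)) * c (r, (t : ℤ) + 1) = 0 := by
          linear_combination h
        have c1 : (t : ℂ) + 1 ≠ 0 := by
          exact_mod_cast (Nat.cast_ne_zero (R := ℂ)).mpr (Nat.succ_ne_zero t)
        have c2 : (t : ℂ) + 1 + lam₂ ≠ 0 := by
          intro hz
          exact h2 (t + 1) (by omega) (by omega) (by push_cast; linear_combination hz)
        have c3 : 4 * ((t : ℂ) + 1) * ((t : ℂ) + 1 + lam₂) ≠ 0 :=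
          mul_ne_zero (mul_ne_zero (by norm_num) c1) c2
        exact (mul_eq_zero.mp h').resolve_left c3
      · push_cast
        exact hs _ _ (Or.inr (Or.inr (by omega)))
  rintro ⟨r, t⟩
  by_cases ht : t < 0
  · exact hs _ _ (Or.inr (Or.inl ht))
  · have := key t.toNat r
    rwa [Int.toNat_of_nonneg (by omega)] at this

/-- Row 0 vanishes once `c(0,0)` and `c(k₁,0)` vanish. -/
private lemma row0_zero {ρ : ℝ} {lam₂ : ℂ} {k k₁ : ℕ} {c : ℤ × ℤ → ℂ}
    (hc : IsORSol ρ (-(k₁ : ℂ)) lam₂ k c)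
    (h0 : c (0, 0) = 0) (h1 : c ((k₁ : ℤ), 0) = 0) :
    ∀ r : ℤ, c (r, 0) = 0 := by
  obtain ⟨hs, hE1, hE2⟩ := hc
  have key : ∀ n : ℕ, c ((n : ℤ), 0) = 0 := by
    intro n
    induction n with
    | zero => simpa using h0
    | succ m ih =>
      by_cases hm : m + 1 = k₁
      · push_cast
        rw [show (m : ℤ) + 1 = (k₁ : ℤ) from by exact_mod_cast hm]
        exact h1
      · by_cases hk' : (m : ℤ) ≤ (k : ℤ) - 1
        · have h := hE1 (m : ℤ) 0 (Int.natCast_nonneg m) le_rfl (by omega)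
          have hz : c ((m : ℤ), 0 - 1) = 0 := hs _ _ (Or.inr (Or.inl (by norm_num)))
          rw [ih, hz] at h
          push_cast at h ⊢
          have h' : (4 * ((m : ℂ) + 1) * ((m : ℂ) + 1 - (k₁ : ℂ))) * c ((m : ℤ) + 1, 0) = 0 := by
            linear_combination h
          have c1 : (m : ℂ) + 1 ≠ 0 := by
            exact_mod_cast (Nat.cast_ne_zero (R := ℂ)).mpr (Nat.succ_ne_zero m)
          have c2 : (m : ℂ) + 1 - (k₁ : ℂ) ≠ 0 := by
            have := intC_ne ((m : ℤ) + 1 - (k₁ : ℤ)) (by omega)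
            push_cast at this
            exact this
          exact (mul_eq_zero.mp h').resolve_left
            (mul_ne_zero (mul_ne_zero (by norm_num) c1) c2)
        · push_cast
          exact hs _ _ (Or.inr (Or.inr (by omega)))
  intro r
  by_cases hr : r < 0
  · exact hs _ _ (Or.inl hr)
  · have := key r.toNat
    rwa [Int.toNat_of_nonneg (by omega)] at this

/-- In the case `k₁ + l₂ < k`, every solution satisfies `c(0,0) = 0`. -/
private lemma lt_forces {ρ : ℝ} {k k₁ l₂ : ℕ} {c : ℤ × ℤ → ℂ}
    (hk₁ : 1 ≤ k₁) (hlt : k₁ + l₂ < k)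
    (hc : IsORSol ρ (-(k₁ : ℂ)) (-(ρ : ℂ) - (l₂ : ℂ)) k c) :
    c (0, 0) = 0 := by
  obtain ⟨hs, hE1, hE2⟩ := hc
  have top : c ((k₁ : ℤ) - 1, 0) = 0 := by
    have h := hE1 ((k₁ : ℤ) - 1) 0 (by omega) le_rfl (by omega)
    have hz : c ((k₁ : ℤ) - 1, 0 - 1) = 0 := hs _ _ (Or.inr (Or.inl (by norm_num)))
    rw [hz] at h
    push_cast at h
    have h' : (2 * ((k : ℂ) - (k₁ : ℂ) + 1) * ((k : ℂ) - (k₁ : ℂ) - (l₂ : ℂ))) *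
        c ((k₁ : ℤ) - 1, 0) = 0 := by
      linear_combination h
    have c1 : (k : ℂ) - (k₁ : ℂ) + 1 ≠ 0 := by
      have := intC_ne ((k : ℤ) - (k₁ : ℤ) + 1) (by omega)
      push_cast at this; exact this
    have c2 : (k : ℂ) - (k₁ : ℂ) - (l₂ : ℂ) ≠ 0 := by
      have := intC_ne ((k : ℤ) - (k₁ : ℤ) - (l₂ : ℤ)) (by omega)
      push_cast at this; exact this
    exact (mul_eq_zero.mp h').resolve_left
      (mul_ne_zero (mul_ne_zero (by norm_num) c1) c2)
  have down : ∀ n : ℕ, n ≤ k₁ - 1 → c ((k₁ : ℤ) - 1 - (n : ℤ), 0) = 0 := by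
    intro n
    induction n with
    | zero => intro _; simpa using top
    | succ n ih =>
      intro hn
      have hprev := ih (by omega)
      have h := hE1 ((k₁ : ℤ) - 1 - ((n : ℤ) + 1)) 0 (by omega) le_rfl (by omega)
      rw [show (k₁ : ℤ) - 1 - ((n : ℤ) + 1) + 1 = (k₁ : ℤ) - 1 - (n : ℤ) from by ring] at h
      have hz : c ((k₁ : ℤ) - 1 - ((n : ℤ) + 1), 0 - 1) = 0 :=
        hs _ _ (Or.inr (Or.inl (by norm_num)))
      rw [hprev, hz] at h
      push_cast at h ⊢
      have h' : (2 * ((k : ℂ) - ((k₁ : ℂ) - 1 - ((n : ℂ) + 1))) *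
          ((k : ℂ) - ((k₁ : ℂ) - 1 - ((n : ℂ) + 1)) - 1 - (l₂ : ℂ))) *
          c ((k₁ : ℤ) - 1 - ((n : ℤ) + 1), 0) = 0 := by
        linear_combination h
      have c1 : (k : ℂ) - ((k₁ : ℂ) - 1 - ((n : ℂ) + 1)) ≠ 0 := by
        have := intC_ne ((k : ℤ) - ((k₁ : ℤ) - 1 - ((n : ℤ) + 1))) (by omega)
        push_cast at this; exact this
      have c2 : (k : ℂ) - ((k₁ : ℂ) - 1 - ((n : ℂ) + 1)) - 1 - (l₂ : ℂ) ≠ 0 := by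
        have := intC_ne ((k : ℤ) - ((k₁ : ℤ) - 1 - ((n : ℤ) + 1)) - 1 - (l₂ : ℤ)) (by omega)
        push_cast at this; exact this
      exact (mul_eq_zero.mp h').resolve_left
        (mul_ne_zero (mul_ne_zero (by norm_num) c1) c2)
  have := down (k₁ - 1) le_rfl
  rwa [show (k₁ : ℤ) - 1 - ((k₁ - 1 : ℕ) : ℤ) = 0 from by omega] at this

/-- Mixed case: `λ₁ = -k₁` with `1 ≤ k₁ ≤ k-1`, `λ₂ = -ρ-l₂` with `0 ≤ l₂ ≤ k-1`
and `λ₂ ∉ {-1,…,-k}`. If `k₁ + l₂ < k` the solution space has dimension at most 1;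
if `k₁ + l₂ ≥ k` it has dimension at most 2. -/
theorem stmt_14 (k : ℕ) (ρ : ℝ) (hρ : 0 < ρ) (lam₁ lam₂ : ℂ)
    (k₁ l₂ : ℕ) (hk₁ : 1 ≤ k₁) (hk₁' : k₁ ≤ k - 1) (hl₂ : l₂ < k)
    (hlam₁ : lam₁ = -(k₁ : ℂ)) (hlam₂ : lam₂ = -(ρ : ℂ) - (l₂ : ℂ))
    (h2 : ∀ j : ℕ, 1 ≤ j → j ≤ k → lam₂ ≠ -(j : ℂ)) :
    (k₁ + l₂ < k →
      ∀ c d : ℤ × ℤ → ℂ, IsORSol ρ lam₁ lam₂ k c → IsORSol ρ lam₁ lam₂ k d →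
        ∃ a b : ℂ, (a ≠ 0 ∨ b ≠ 0) ∧ ∀ p : ℤ × ℤ, a * c p + b * d p = 0) ∧
    (k ≤ k₁ + l₂ →
      ∀ c d e : ℤ × ℤ → ℂ, IsORSol ρ lam₁ lam₂ k c → IsORSol ρ lam₁ lam₂ k d →
        IsORSol ρ lam₁ lam₂ k e →
        ∃ a b g : ℂ, (a ≠ 0 ∨ b ≠ 0 ∨ g ≠ 0) ∧
          ∀ p : ℤ × ℤ, a * c p + b * d p + g * e p = 0) := by
  subst hlam₁ hlam₂
  constructor
  · intro hlt c d hc hd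
    obtain ⟨a, b, hab, hrel⟩ := two_dep (c ((k₁ : ℤ), 0)) (d ((k₁ : ℤ), 0))
    refine ⟨a, b, hab, ?_⟩
    have hsol : IsORSol ρ (-(k₁ : ℂ)) (-(ρ : ℂ) - (l₂ : ℂ)) k
        (fun p => a * c p + b * d p) := sol_comb2 a b hc hd
    have h0 : (fun p : ℤ × ℤ => a * c p + b * d p) (0, 0) = 0 :=
      lt_forces hk₁ hlt hsol
    have hz := zero_prop h2 hsol (row0_zero hsol h0 hrel)
    intro p
    exact hz p
  · intro hge c d e hc hd he
    obtain ⟨a, b, g, habg, hX, hY⟩ := three_dep (c (0, 0)) (d (0, 0)) (e (0, 0))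
      (c ((k₁ : ℤ), 0)) (d ((k₁ : ℤ), 0)) (e ((k₁ : ℤ), 0))
    refine ⟨a, b, g, habg, ?_⟩
    have hsol : IsORSol ρ (-(k₁ : ℂ)) (-(ρ : ℂ) - (l₂ : ℂ)) k
        (fun p => a * c p + b * d p + g * e p) := sol_comb3 a b g hc hd he
    have hz := zero_prop h2 hsol (row0_zero hsol hX hY)
    intro p
    exact hz p
end

section
/- With the Ovsienko–Redou system S(λ₁, λ₂; k) as defined (k ∈ ℕ, ρ > 0 real), suppose λ₁ = -ρ - l₁ and λ₂ = -ρ - l₂ with l₁, l₂ ∈ {0, 1, …, k-1}, and suppose λ₁, λ₂ ∉ {-1, -2, …, -k}. Then dim Sol(λ₁, λ₂; k) ≤ 1. -/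
/-- Linear combinations of solutions are solutions. -/
lemma IsORSol.linComb {ρ : ℝ} {lam₁ lam₂ : ℂ} {k : ℕ} {c d : ℤ × ℤ → ℂ}
    (hc : IsORSol ρ lam₁ lam₂ k c) (hd : IsORSol ρ lam₁ lam₂ k d) (a b : ℂ) :
    IsORSol ρ lam₁ lam₂ k (fun p => a * c p + b * d p) := by
  refine ⟨?_, ?_, ?_⟩
  · intro r t h
    simp [hc.1 r t h, hd.1 r t h]
  · intro r t hr ht hrt
    have e1 := hc.2.1 r t hr ht hrt
    have e2 := hd.2.1 r t hr ht hrt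
    simp only
    linear_combination a * e1 + b * e2
  · intro r t hr ht hrt
    have e1 := hc.2.2 r t hr ht hrt
    have e2 := hd.2.2 r t hr ht hrt
    simp only
    linear_combination a * e1 + b * e2

lemma cast_plus_ne_zero {k : ℕ} {lam : ℂ} (h : ∀ j : ℕ, 1 ≤ j → j ≤ k → lam ≠ -(j : ℂ))
    {r : ℤ} (hr : 1 ≤ r) (hrk : r ≤ (k : ℤ)) : (r : ℂ) + lam ≠ 0 := by
  intro heq
  apply h r.toNat (by omega) (by omega)
  have hcast : ((r.toNat : ℕ) : ℂ) = (r : ℂ) := by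
    norm_cast
    omega
  rw [hcast]
  linear_combination heq

/-- A solution vanishing at the origin vanishes everywhere. -/
lemma IsORSol.eq_zero {ρ : ℝ} {lam₁ lam₂ : ℂ} {k : ℕ} {c : ℤ × ℤ → ℂ}
    (hc : IsORSol ρ lam₁ lam₂ k c)
    (h1 : ∀ j : ℕ, 1 ≤ j → j ≤ k → lam₁ ≠ -(j : ℂ))
    (h2 : ∀ j : ℕ, 1 ≤ j → j ≤ k → lam₂ ≠ -(j : ℂ))
    (h0 : c (0, 0) = 0) : ∀ p : ℤ × ℤ, c p = 0 := by
  have aux : ∀ n : ℕ, ∀ r t : ℤ, 0 ≤ r → 0 ≤ t → r + t = (n : ℤ) → c (r, t) = 0 := by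
    intro n
    induction n using Nat.strong_induction_on with
    | _ n ih =>
      intro r t hr ht hn
      by_cases hk : (k : ℤ) < r + t
      · exact hc.1 r t (Or.inr (Or.inr hk))
      push_neg at hk
      rcases eq_or_lt_of_le hr with hr0 | hr1
      · -- r = 0
        rw [← hr0]
        rcases eq_or_lt_of_le ht with ht0 | ht1
        · rw [← ht0]; exact h0
        · -- use E² at (0, t-1)
          have e2 := hc.2.2 0 (t - 1) le_rfl (by omega) (by omega)
          have hz1 : c (0, t - 1) = 0 := ih (n - 1) (by omega) 0 (t - 1) le_rfl (by omega) (by omega)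
          have hz2 : c (0 - 1, t - 1) = 0 := hc.1 _ _ (Or.inl (by omega))
          rw [hz1, hz2, show t - 1 + 1 = t from by ring] at e2
          have key : 4 * (t : ℂ) * ((t : ℂ) + lam₂) * c (0, t) = 0 := by
            push_cast at e2 ⊢
            linear_combination e2
          have hne : 4 * (t : ℂ) * ((t : ℂ) + lam₂) ≠ 0 := by
            refine mul_ne_zero (mul_ne_zero (by norm_num : (4:ℂ) ≠ 0) ?_) ?_
            · exact_mod_cast (by omega : t ≠ 0)
            · exact cast_plus_ne_zero h2 (by omega) (by omega)
          exact (mul_eq_zero.mp key).resolve_left hne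
      · -- r ≥ 1, use E¹ at (r-1, t)
        have e1 := hc.2.1 (r - 1) t (by omega) ht (by omega)
        have hz1 : c (r - 1, t) = 0 := ih (n - 1) (by omega) (r - 1) t (by omega) ht (by omega)
        have hz2 : c (r - 1, t - 1) = 0 := by
          rcases eq_or_lt_of_le ht with ht0 | ht1
          · exact hc.1 _ _ (Or.inr (Or.inl (by omega)))
          · exact ih (n - 2) (by omega) (r - 1) (t - 1) (by omega) (by omega) (by omega)
        rw [hz1, hz2, show r - 1 + 1 = r from by ring] at e1
        have key : 4 * (r : ℂ) * ((r : ℂ) + lam₁) * c (r, t) = 0 := by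
          push_cast at e1 ⊢
          linear_combination e1
        have hne : 4 * (r : ℂ) * ((r : ℂ) + lam₁) ≠ 0 := by
          refine mul_ne_zero (mul_ne_zero (by norm_num : (4:ℂ) ≠ 0) ?_) ?_
          · exact_mod_cast (by omega : r ≠ 0)
          · exact cast_plus_ne_zero h1 (by omega) (by omega)
        exact (mul_eq_zero.mp key).resolve_left hne
  intro ⟨r, t⟩
  by_cases h : r < 0 ∨ t < 0 ∨ (k : ℤ) < r + t
  · exact hc.1 r t h
  · push_neg at h
    exact aux (r + t).toNat r t h.1 h.2.1 (by omega)

/-- If `λ₁ = -ρ-l₁`, `λ₂ = -ρ-l₂` with `0 ≤ l₁, l₂ ≤ k-1` and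
`λ₁, λ₂ ∉ {-1,…,-k}`, then the solution space has dimension at most 1. -/
theorem stmt_15 (k : ℕ) (ρ : ℝ) (hρ : 0 < ρ) (lam₁ lam₂ : ℂ)
    (l₁ l₂ : ℕ) (hl₁ : l₁ < k) (hl₂ : l₂ < k)
    (hlam₁ : lam₁ = -(ρ : ℂ) - (l₁ : ℂ)) (hlam₂ : lam₂ = -(ρ : ℂ) - (l₂ : ℂ))
    (h1 : ∀ j : ℕ, 1 ≤ j → j ≤ k → lam₁ ≠ -(j : ℂ))
    (h2 : ∀ j : ℕ, 1 ≤ j → j ≤ k → lam₂ ≠ -(j : ℂ)) :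
    ∀ c d : ℤ × ℤ → ℂ, IsORSol ρ lam₁ lam₂ k c → IsORSol ρ lam₁ lam₂ k d →
      ∃ a b : ℂ, (a ≠ 0 ∨ b ≠ 0) ∧ ∀ p : ℤ × ℤ, a * c p + b * d p = 0 := by
  intro c d hc hd
  by_cases h0 : c (0, 0) = 0
  · refine ⟨1, 0, Or.inl one_ne_zero, fun p => ?_⟩
    simp [hc.eq_zero h1 h2 h0 p]
  · refine ⟨d (0, 0), -c (0, 0), Or.inr (neg_ne_zero.mpr h0), ?_⟩
    have he : IsORSol ρ lam₁ lam₂ k (fun p => d (0, 0) * c p + (-c (0, 0)) * d p) :=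
      hc.linComb hd (d (0, 0)) (-c (0, 0))
    have h00 : (fun p => d (0, 0) * c p + (-c (0, 0)) * d p) (0, 0) = 0 := by ring
    exact he.eq_zero h1 h2 h00
end
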